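/- arXiv:math/0408093 — 8 statements merged into one kernel-verified Lean document; each statement's English description precedes it below -/
import Mathlib

section
/- Let m ∈ ℕ, m ≥ 1, and let F : (0,1] → ℂ be a bounded function that is constant on each interval (1/(k+1), 1/k] for every k ∈ ℕ, and satisfies F(x) = −1 for all x ∈ (1/m, 1]. Then for every complex s with Re s > 0, s·∫_0^1 (F(x)+1)·x^{s−1} dx = Σ_{k=m}^∞ F(1/k)·[1/k^s − 1/(k+1)^s] + 1/m^s, the series on the right being absolutely convergent. -/
open MeasureTheory Set Filter Topology Function TopologicalSpace

/-
On `(1/(k+1), 1/k]` the integrand `F(x) x^(s-1)` is `F(1/k) x^(s-1)`, and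
`s ∫_a^b x^(s-1) dx = b^s - a^s`, so `s` times its integral there is the `k`-th term of the series.
These intervals partition `(0, 1/m]`, on which `F(x) x^(s-1)` is integrable (bounded times
integrable), so countable additivity of the integral sums the series, and `‖∫_I f‖ ≤ ∫_I ‖f‖`
makes it absolutely convergent. The `+1` cancels `F` on `(1/m, 1]` and contributes
`s ∫_0^{1/m} x^(s-1) dx = 1/m^s`.
-/

theorem Antitone.iUnion_Ioc_succ_eq_Ioc {α : Type*} [LinearOrder α] [TopologicalSpace α]
    [OrderTopology α] {u : ℕ → α} {a : α} (hu : Antitone u)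
    (h : Tendsto u atTop (𝓝 a)) : ⋃ n, Ioc (u (n + 1)) (u n) = Ioc a (u 0) := by
  ext x
  simp only [mem_iUnion, mem_Ioc]
  constructor
  · rintro ⟨n, hlt, hle⟩
    exact ⟨(hu.le_of_tendsto h (n + 1)).trans_lt hlt, hle.trans (hu n.zero_le)⟩
  · rintro ⟨hax, hx⟩
    by_contra! hnot
    have hle : ∀ n, x ≤ u n := fun n =>
      Nat.rec hx (fun n ih => not_lt.1 fun hlt => (hnot n hlt).not_ge ih) n
    obtain ⟨n, hn⟩ := (h.eventually (gt_mem_nhds hax)).exists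
    exact (hle n).not_gt hn

theorem aestronglyMeasurable_restrict_iUnion_of_eqOn_const {X β ι : Type*} [MeasurableSpace X]
    {μ : Measure X} [TopologicalSpace β] [PseudoMetrizableSpace β] [Countable ι]
    {f : X → β} {t : ι → Set X} {c : ι → β} (ht : ∀ i, MeasurableSet (t i))
    (hf : ∀ i, EqOn f (fun _ => c i) (t i)) : AEStronglyMeasurable f (μ.restrict (⋃ i, t i)) :=
  aestronglyMeasurable_iUnion_iff.2 fun i =>
    aestronglyMeasurable_const.congr (ae_restrict_of_forall_mem (ht i) fun _ hx => (hf i hx).symm)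

theorem summable_norm_setIntegral_of_integrableOn_iUnion {X E ι : Type*} [MeasurableSpace X]
    {μ : Measure X} [NormedAddCommGroup E] [NormedSpace ℝ E] [Countable ι] {f : X → E}
    {t : ι → Set X} (ht : ∀ i, MeasurableSet (t i)) (hd : Pairwise (Disjoint on t))
    (hf : IntegrableOn f (⋃ i, t i) μ) : Summable fun i => ‖∫ x in t i, f x ∂μ‖ :=
  (hasSum_integral_iUnion ht hd hf.norm).summable.of_nonneg_of_le (fun _ => norm_nonneg _)
    fun _ => norm_integral_le_integral_norm _

theorem mul_setIntegral_Ioc_cpow_sub_one {s : ℂ} (hs : 0 < s.re) {a b : ℝ} (hab : a ≤ b) :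
    s * ∫ x in Ioc a b, (x : ℂ) ^ (s - 1) = (b : ℂ) ^ s - (a : ℂ) ^ s := by
  have hs0 : s ≠ 0 := by rintro rfl; simp at hs
  rw [← intervalIntegral.integral_of_le hab, integral_cpow (Or.inl (by simpa using hs)),
    sub_add_cancel, mul_div_cancel₀ _ hs0]

theorem mul_setIntegral_Ioc_mul_cpow_sub_one_of_eqOn {F : ℝ → ℂ} {c s : ℂ} (hs : 0 < s.re)
    {a b : ℝ} (hab : a ≤ b) (hF : EqOn F (fun _ => c) (Ioc a b)) :
    s * ∫ x in Ioc a b, F x * (x : ℂ) ^ (s - 1) = c * ((b : ℂ) ^ s - (a : ℂ) ^ s) := by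
  rw [setIntegral_congr_fun measurableSet_Ioc fun x hx => by rw [hF hx], integral_const_mul,
    mul_left_comm, mul_setIntegral_Ioc_cpow_sub_one hs hab]

theorem integrableOn_Ioc_cpow_sub_one {s : ℂ} (hs : 0 < s.re) (a b : ℝ) :
    IntegrableOn (fun x : ℝ => (x : ℂ) ^ (s - 1)) (Ioc a b) :=
  (intervalIntegral.intervalIntegrable_cpow' (by simpa using hs)).1

theorem Complex.ofReal_one_div_natCast_cpow (k : ℕ) (s : ℂ) :
    ((1 / k : ℝ) : ℂ) ^ s = 1 / (k : ℂ) ^ s := by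
  rw [ofReal_div, ofReal_one, ofReal_natCast, one_div, one_div,
    inv_cpow _ _ (by rw [natCast_arg]; exact Real.pi_ne_zero.symm)]

theorem antitone_one_div_natCast_add {m : ℕ} (hm : 0 < m) :
    Antitone fun j : ℕ => 1 / ((m + j : ℕ) : ℝ) := fun i j hij =>
  one_div_le_one_div_of_le (Nat.cast_pos.2 (by omega)) (by exact_mod_cast by omega)

theorem tendsto_one_div_natCast_add_atTop_nhds_zero (m : ℕ) :
    Tendsto (fun j : ℕ => 1 / ((m + j : ℕ) : ℝ)) atTop (𝓝 0) :=
  (tendsto_one_div_atTop_nhds_zero_nat.comp (tendsto_add_atTop_nat m)).congr fun j => by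
    simp [add_comm]

section StepFunction

variable {u : ℕ → ℝ} {F : ℝ → ℂ} {C : ℝ} {s : ℂ}

theorem integrableOn_mul_cpow_sub_one_of_eqOn_Ioc_succ (hu : Antitone u)
    (hu0 : Tendsto u atTop (𝓝 0)) (hF : ∀ n, EqOn F (fun _ => F (u n)) (Ioc (u (n + 1)) (u n)))
    (hC : ∀ x ∈ Ioc 0 (u 0), ‖F x‖ ≤ C) (hs : 0 < s.re) :
    IntegrableOn (fun x => F x * (x : ℂ) ^ (s - 1)) (Ioc 0 (u 0)) :=
  (integrableOn_Ioc_cpow_sub_one hs 0 (u 0)).bdd_mul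
    (hu.iUnion_Ioc_succ_eq_Ioc hu0 ▸
      aestronglyMeasurable_restrict_iUnion_of_eqOn_const (fun _ => measurableSet_Ioc) hF)
    (ae_restrict_of_forall_mem measurableSet_Ioc hC)

theorem summable_norm_and_hasSum_mul_cpow_sub_of_eqOn_Ioc_succ (hu : Antitone u)
    (hu0 : Tendsto u atTop (𝓝 0)) (hF : ∀ n, EqOn F (fun _ => F (u n)) (Ioc (u (n + 1)) (u n)))
    (hC : ∀ x ∈ Ioc 0 (u 0), ‖F x‖ ≤ C) (hs : 0 < s.re) :
    Summable (fun n => ‖F (u n) * ((u n : ℂ) ^ s - (u (n + 1) : ℂ) ^ s)‖) ∧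
    HasSum (fun n => F (u n) * ((u n : ℂ) ^ s - (u (n + 1) : ℂ) ^ s))
      (s * ∫ x in Ioc 0 (u 0), F x * (x : ℂ) ^ (s - 1)) := by
  have hFP := integrableOn_mul_cpow_sub_one_of_eqOn_Ioc_succ hu hu0 hF hC hs
  have hdisj : Pairwise (Disjoint on fun n => Ioc (u (n + 1)) (u n)) :=
    hu.pairwise_disjoint_on_Ioc_succ
  have hpiece : ∀ n, s * ∫ x in Ioc (u (n + 1)) (u n), F x * (x : ℂ) ^ (s - 1) =
      F (u n) * ((u n : ℂ) ^ s - (u (n + 1) : ℂ) ^ s) := fun n =>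
    mul_setIntegral_Ioc_mul_cpow_sub_one_of_eqOn hs (hu n.le_succ) (hF n)
  rw [← hu.iUnion_Ioc_succ_eq_Ioc hu0] at hFP ⊢
  refine ⟨?_, by simpa only [hpiece] using
    (hasSum_integral_iUnion (fun _ => measurableSet_Ioc) hdisj hFP).mul_left s⟩
  simpa only [← norm_mul, hpiece] using
    (summable_norm_setIntegral_of_integrableOn_iUnion (fun _ => measurableSet_Ioc) hdisj
      hFP).mul_left ‖s‖

end StepFunction

/-- For a bounded step function `F` on `(0,1]` (constant on each `(1/(k+1), 1/k]`)
with `F ≡ -1` on `(1/m, 1]`, and `Re s > 0`: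
`s ∫_0^1 (F(x)+1) x^{s-1} dx = ∑_{k=m}^∞ F(1/k)[k^{-s} - (k+1)^{-s}] + m^{-s}`,
the series being absolutely convergent. -/
theorem stmt_2 (m : ℕ) (hm : 1 ≤ m) (F : ℝ → ℂ)
    (hbdd : ∃ C : ℝ, ∀ x ∈ Set.Ioc (0:ℝ) 1, ‖F x‖ ≤ C)
    (hstep : ∀ k : ℕ, 1 ≤ k →
      ∀ x ∈ Set.Ioc (1 / ((k : ℝ) + 1)) (1 / (k : ℝ)), F x = F (1 / (k : ℝ)))
    (hF : ∀ x ∈ Set.Ioc (1 / (m : ℝ)) (1 : ℝ), F x = -1)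
    (s : ℂ) (hs : 0 < s.re) :
    Summable (fun j : ℕ =>
      ‖F (1 / ((m + j : ℕ) : ℝ)) * (1 / ((m + j : ℕ) : ℂ) ^ s - 1 / ((m + j + 1 : ℕ) : ℂ) ^ s)‖) ∧
    s * ∫ x in (0:ℝ)..1, (F x + 1) * (x : ℂ) ^ (s - 1)
      = (∑' j : ℕ,
          F (1 / ((m + j : ℕ) : ℝ)) * (1 / ((m + j : ℕ) : ℂ) ^ s - 1 / ((m + j + 1 : ℕ) : ℂ) ^ s))
        + 1 / (m : ℂ) ^ s := by
  obtain ⟨C, hC⟩ := hbdd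
  set u : ℕ → ℝ := fun j => 1 / ((m + j : ℕ) : ℝ) with hu_def
  have hu : Antitone u := antitone_one_div_natCast_add hm
  have hu0 : Tendsto u atTop (𝓝 0) := tendsto_one_div_natCast_add_atTop_nhds_zero m
  have hu01 : Ioc 0 (u 0) ⊆ Ioc 0 1 :=
    Ioc_subset_Ioc_right (div_le_one_of_le₀ (by exact_mod_cast hm) (Nat.cast_nonneg _))
  have hconst : ∀ j, EqOn F (fun _ => F (u j)) (Ioc (u (j + 1)) (u j)) := fun j x hx =>
    hstep (m + j) (by omega) x (by simpa [hu_def, add_assoc] using hx)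
  have hCu : ∀ x ∈ Ioc 0 (u 0), ‖F x‖ ≤ C := fun x hx => hC x (hu01 hx)
  have hcpow : ∀ j, (u j : ℂ) ^ s = 1 / ((m + j : ℕ) : ℂ) ^ s := fun j =>
    Complex.ofReal_one_div_natCast_cpow _ s
  obtain ⟨hsummable, hsum⟩ :=
    summable_norm_and_hasSum_mul_cpow_sub_of_eqOn_Ioc_succ hu hu0 hconst hCu hs
  simp only [hcpow, ← add_assoc] at hsummable hsum
  refine ⟨hsummable, ?_⟩
  have hPint : s * ∫ x in Ioc 0 (u 0), (x : ℂ) ^ (s - 1) = 1 / (m : ℂ) ^ s := by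
    rw [mul_setIntegral_Ioc_cpow_sub_one hs (hu.le_of_tendsto hu0 0), hcpow,
      Complex.ofReal_zero, Complex.zero_cpow (by rintro rfl; simp at hs), sub_zero]
    rfl
  calc s * ∫ x in (0 : ℝ)..1, (F x + 1) * (x : ℂ) ^ (s - 1)
      = s * ∫ x in Ioc 0 (u 0), (F x + 1) * (x : ℂ) ^ (s - 1) := by
        rw [intervalIntegral.integral_of_le zero_le_one,
          setIntegral_eq_of_subset_of_forall_sdiff_eq_zero measurableSet_Ioc hu01 fun x hx => ?_]
        rw [hF x ⟨not_le.1 fun h => hx.2 ⟨hx.1.1, h⟩, hx.1.2⟩, neg_add_cancel, zero_mul]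
    _ = (s * ∫ x in Ioc 0 (u 0), F x * (x : ℂ) ^ (s - 1))
        + s * ∫ x in Ioc 0 (u 0), (x : ℂ) ^ (s - 1) := by
        simp_rw [add_mul, one_mul]
        rw [integral_add (integrableOn_mul_cpow_sub_one_of_eqOn_Ioc_succ hu hu0 hconst hCu hs)
          (integrableOn_Ioc_cpow_sub_one hs 0 (u 0)), mul_add]
    _ = _ := by rw [hsum.tsum_eq, hPint]
end

section
/- Under the iterative construction of the sequences (k_i) and (b_i), for every i ≥ 2 the function b_i is constant on each interval [k, k+1) for every k ∈ ℕ, i.e. b_i(x) = b_i(k) whenever k ≤ x < k+1. -/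
/-! Each `b_i` is `b_2` plus multiples of sawtooth combinations `ρ(x/a) - (c/a) ρ(x/c)` with
`c ≠ 0`. On `[n, n+1)` both fractional parts grow linearly, with slopes `1/a` and `1/c`, so such a
combination has slope `1/a - 1/a = 0`: it depends only on `⌊x⌋`, and induction on `i` finishes. -/

section FractDiv

variable {K : Type*} [Field K] [LinearOrder K] [IsStrictOrderedRing K] [FloorRing K]

theorem Int.fract_div_natCast_sub_of_floor_eq {x y : K} (h : ⌊x⌋ = ⌊y⌋) (m : ℕ) :
    Int.fract (x / m) - Int.fract (y / m) = (x - y) / m := by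
  simp only [Int.fract, Int.floor_div_natCast, h]
  ring

theorem Int.fract_div_sub_mul_fract_div_eq_of_floor_eq {x y : K} (h : ⌊x⌋ = ⌊y⌋)
    (a : ℕ) {c : ℕ} (hc : c ≠ 0) :
    Int.fract (x / a) - (c / a) * Int.fract (x / c)
      = Int.fract (y / a) - (c / a) * Int.fract (y / c) := by
  have hca : (c / a : K) * ((x - y) / c) = (x - y) / a := by
    rw [div_mul_div_comm, mul_comm (c : K), mul_div_mul_right _ _ (Nat.cast_ne_zero.mpr hc)]
  linear_combination Int.fract_div_natCast_sub_of_floor_eq h a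
    - (c / a : K) * Int.fract_div_natCast_sub_of_floor_eq h c - hca

end FractDiv

theorem stmt_8_general (k : ℕ → ℕ) (b : ℕ → ℝ → ℝ)
    (hk2 : k 2 = 2)
    (hb2 : ∀ x : ℝ, b 2 x
      = Int.fract (x / (k 1 : ℝ)) - ((k 2 : ℝ) / (k 1 : ℝ)) * Int.fract (x / (k 2 : ℝ)))
    (hmono : ∀ i : ℕ, 2 ≤ i → k i < k (i + 1))
    (hbrec : ∀ i : ℕ, 2 ≤ i → ∀ x : ℝ, b (i + 1) x
      = b i x + (1 + b i ((k i : ℝ)))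
          * (Int.fract (x / (k i : ℝ))
            - ((k (i + 1) : ℝ) / (k i : ℝ)) * Int.fract (x / (k (i + 1) : ℝ)))) :
    ∀ i : ℕ, 2 ≤ i → ∀ n : ℕ, ∀ x : ℝ, (n : ℝ) ≤ x → x < (n : ℝ) + 1 → b i x = b i (n : ℝ) := by
  suffices h : ∀ i, 2 ≤ i → ∀ x y : ℝ, ⌊x⌋ = ⌊y⌋ → b i x = b i y by
    intro i hi n x h1 h2
    refine h i hi x n ?_
    rw [Int.floor_natCast, Int.floor_eq_iff]
    exact ⟨mod_cast h1, mod_cast h2⟩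
  intro i hi
  induction i, hi using Nat.le_induction with
  | base =>
    intro x y hxy
    rw [hb2, hb2, hk2]
    exact Int.fract_div_sub_mul_fract_div_eq_of_floor_eq hxy _ two_ne_zero
  | succ j hj ih =>
    intro x y hxy
    rw [hbrec j hj, hbrec j hj, ih x y hxy,
      Int.fract_div_sub_mul_fract_div_eq_of_floor_eq hxy _ (Nat.ne_zero_of_lt (hmono j hj))]

/-- Each `b_i`, `i ≥ 2`, is constant on each interval `[n, n+1)`, `n ∈ ℕ`. -/
theorem stmt_8 (k : ℕ → ℕ) (b : ℕ → ℝ → ℝ)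
    (hk1 : k 1 = 1) (hk2 : k 2 = 2)
    (hb2 : ∀ x : ℝ, b 2 x
      = Int.fract (x / (k 1 : ℝ)) - ((k 2 : ℝ) / (k 1 : ℝ)) * Int.fract (x / (k 2 : ℝ)))
    (hmono : ∀ i : ℕ, 2 ≤ i → k i < k (i + 1))
    (hne : ∀ i : ℕ, 2 ≤ i → b i ((k (i + 1) : ℝ)) ≠ b i ((k i : ℝ)))
    (hleast : ∀ i : ℕ, 2 ≤ i → ∀ m : ℕ, k i < m → m < k (i + 1) → b i (m : ℝ) = b i ((k i : ℝ)))
    (hbrec : ∀ i : ℕ, 2 ≤ i → ∀ x : ℝ, b (i + 1) x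
      = b i x + (1 + b i ((k i : ℝ)))
          * (Int.fract (x / (k i : ℝ))
            - ((k (i + 1) : ℝ) / (k i : ℝ)) * Int.fract (x / (k (i + 1) : ℝ)))) :
    ∀ i : ℕ, 2 ≤ i → ∀ n : ℕ, ∀ x : ℝ, (n : ℝ) ≤ x → x < (n : ℝ) + 1 → b i x = b i (n : ℝ) :=
  stmt_8_general k b hk2 hb2 hmono hbrec
end

section
/- Under the iterative construction of the sequences (k_i) and (b_i), for every i ≥ 2 one has b_{i+1}(k_i) = −1. -/
/- Evaluating the correction term of the recurrence at `x = k_i` gives exactly `-1`, because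
`k_i / k_i` is an integer while `0 < k_i / k_{i+1} < 1`; hence
`b_{i+1}(k_i) = b_i(k_i) - (1 + b_i(k_i)) = -1`. -/

theorem fract_div_self_sub_div_mul_fract_div {a c : ℝ} (ha : 0 < a) (hac : a < c) :
    Int.fract (a / a) - (c / a) * Int.fract (a / c) = -1 := by
  have hc : 0 < c := ha.trans hac
  rw [div_self ha.ne', Int.fract_one,
    Int.fract_eq_self.mpr ⟨by positivity, (div_lt_one hc).mpr hac⟩]
  field_simp
  ring

theorem pos_of_two_le_of_lt_succ {k : ℕ → ℕ} (hk2 : 0 < k 2)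
    (hmono : ∀ i : ℕ, 2 ≤ i → k i < k (i + 1)) {i : ℕ} (hi : 2 ≤ i) : 0 < k i := by
  induction i, hi using Nat.le_induction with
  | base => exact hk2
  | succ n hn ih => exact ih.trans (hmono n hn)

theorem stmt_9_general (k : ℕ → ℕ) (b : ℕ → ℝ → ℝ)
    (hk2 : k 2 = 2)
    (hmono : ∀ i : ℕ, 2 ≤ i → k i < k (i + 1))
    (hbrec : ∀ i : ℕ, 2 ≤ i → ∀ x : ℝ, b (i + 1) x
      = b i x + (1 + b i ((k i : ℝ)))
          * (Int.fract (x / (k i : ℝ))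
            - ((k (i + 1) : ℝ) / (k i : ℝ)) * Int.fract (x / (k (i + 1) : ℝ)))) :
    ∀ i : ℕ, 2 ≤ i → b (i + 1) ((k i : ℝ)) = -1 := by
  intro i hi
  have hki : (0 : ℝ) < k i := by
    exact_mod_cast pos_of_two_le_of_lt_succ (by omega) hmono hi
  have hlt : (k i : ℝ) < k (i + 1) := by exact_mod_cast hmono i hi
  rw [hbrec i hi, fract_div_self_sub_div_mul_fract_div hki hlt]
  ring

/-- For every `i ≥ 2`, `b_{i+1}(k_i) = -1`. -/
theorem stmt_9 (k : ℕ → ℕ) (b : ℕ → ℝ → ℝ)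
    (hk1 : k 1 = 1) (hk2 : k 2 = 2)
    (hb2 : ∀ x : ℝ, b 2 x
      = Int.fract (x / (k 1 : ℝ)) - ((k 2 : ℝ) / (k 1 : ℝ)) * Int.fract (x / (k 2 : ℝ)))
    (hmono : ∀ i : ℕ, 2 ≤ i → k i < k (i + 1))
    (hne : ∀ i : ℕ, 2 ≤ i → b i ((k (i + 1) : ℝ)) ≠ b i ((k i : ℝ)))
    (hleast : ∀ i : ℕ, 2 ≤ i → ∀ m : ℕ, k i < m → m < k (i + 1) → b i (m : ℝ) = b i ((k i : ℝ)))
    (hbrec : ∀ i : ℕ, 2 ≤ i → ∀ x : ℝ, b (i + 1) x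
      = b i x + (1 + b i ((k i : ℝ)))
          * (Int.fract (x / (k i : ℝ))
            - ((k (i + 1) : ℝ) / (k i : ℝ)) * Int.fract (x / (k (i + 1) : ℝ)))) :
    ∀ i : ℕ, 2 ≤ i → b (i + 1) ((k i : ℝ)) = -1 :=
  stmt_9_general k b hk2 hmono hbrec
end

section
/- Under the iterative construction of the sequences (k_i) and (b_i), assume in addition k_{i+1} ≤ 2·k_i for all i ≥ 2. Then for every i ≥ 2, b_i(x) = −1 for all x ∈ [1, k_i). -/
lemma aux_fract (k m : ℕ) (hk : 0 < k) (x : ℝ) (h1 : (m:ℝ) ≤ x) (h2 : x < m+1) :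
    Int.fract (x/(k:ℝ)) - Int.fract ((m:ℝ)/(k:ℝ)) = (x - m)/k := by
  have hk' : (0:ℝ) < k := Nat.cast_pos.mpr hk
  set d : ℕ := m / k with hd
  have hdm : d * k ≤ m := Nat.div_mul_le_self m k
  have hdm2 : m < (d + 1) * k := by
    have h := Nat.div_add_mod m k
    have h2 := Nat.mod_lt m hk
    have h3 : (d + 1) * k = k * (m / k) + k := by rw [hd]; ring
    omega
  have hfl : ∀ y : ℝ, (m:ℝ) ≤ y → y < m+1 → ⌊y/(k:ℝ)⌋ = (d : ℤ) := by
    intro y hy1 hy2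
    rw [Int.floor_eq_iff]
    constructor
    · push_cast
      rw [le_div_iff₀ hk']
      calc (d:ℝ) * k ≤ m := by exact_mod_cast hdm
        _ ≤ y := hy1
    · push_cast
      rw [div_lt_iff₀ hk']
      have : (m:ℝ) + 1 ≤ ((d:ℝ)+1) * k := by exact_mod_cast hdm2
      linarith
  have e1 := hfl x h1 h2
  have e2 := hfl (m:ℝ) le_rfl (by linarith)
  rw [Int.fract, Int.fract, e1, e2]
  ring

/-- If moreover `k_{i+1} ≤ 2 k_i` for `i ≥ 2`, then `b_i(x) = -1` for all `x ∈ [1, k_i)`. -/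
theorem stmt_10 (k : ℕ → ℕ) (b : ℕ → ℝ → ℝ)
    (hk1 : k 1 = 1) (hk2 : k 2 = 2)
    (hb2 : ∀ x : ℝ, b 2 x
      = Int.fract (x / (k 1 : ℝ)) - ((k 2 : ℝ) / (k 1 : ℝ)) * Int.fract (x / (k 2 : ℝ)))
    (hmono : ∀ i : ℕ, 2 ≤ i → k i < k (i + 1))
    (hne : ∀ i : ℕ, 2 ≤ i → b i ((k (i + 1) : ℝ)) ≠ b i ((k i : ℝ)))
    (hleast : ∀ i : ℕ, 2 ≤ i → ∀ m : ℕ, k i < m → m < k (i + 1) → b i (m : ℝ) = b i ((k i : ℝ)))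
    (hbrec : ∀ i : ℕ, 2 ≤ i → ∀ x : ℝ, b (i + 1) x
      = b i x + (1 + b i ((k i : ℝ)))
          * (Int.fract (x / (k i : ℝ))
            - ((k (i + 1) : ℝ) / (k i : ℝ)) * Int.fract (x / (k (i + 1) : ℝ))))
    (hgrow : ∀ i : ℕ, 2 ≤ i → k (i + 1) ≤ 2 * k i) :
    ∀ i : ℕ, 2 ≤ i → ∀ x : ℝ, 1 ≤ x → x < (k i : ℝ) → b i x = -1 := by
  -- k i ≥ 2 for i ≥ 2
  have hkge : ∀ i : ℕ, 2 ≤ i → 2 ≤ k i := by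
    intro i hi
    induction i, hi using Nat.le_induction with
    | base => omega
    | succ n hn ih => have := hmono n hn; omega
  suffices H : ∀ i : ℕ, 2 ≤ i →
      ((∀ x : ℝ, 1 ≤ x → x < (k i : ℝ) → b i x = -1) ∧
       (∀ (m : ℕ) (x : ℝ), (m:ℝ) ≤ x → x < (m:ℝ) + 1 → b i x = b i (m:ℝ))) by
    exact fun i hi x h1 h2 => (H i hi).1 x h1 h2
  intro i hi
  induction i, hi using Nat.le_induction with
  | base =>
    constructor
    · intro x h1 h2
      rw [hb2]
      rw [hk1, hk2] at *
      have hf1 : Int.fract (x / (1:ℕ)) = x - 1 := by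
        push_cast
        rw [div_one, Int.fract]
        congr 1
        have : ⌊x⌋ = 1 := by
          rw [Int.floor_eq_iff]
          push_cast at h2 ⊢
          constructor <;> linarith
        rw [this]; norm_num
      have hf2 : Int.fract (x / (2:ℕ)) = x / 2 := by
        push_cast at h2 ⊢
        exact Int.fract_eq_self.mpr ⟨by linarith, by linarith⟩
      rw [hf1, hf2]
      push_cast
      ring
    · intro m x h1 h2
      rw [hb2, hb2]
      have e1 := aux_fract (k 1) m (by omega) x h1 h2
      have e2 := aux_fract (k 2) m (by omega) x h1 h2
      simp only [hk1, hk2] at e1 e2 ⊢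
      push_cast at e1 e2 ⊢
      linear_combination e1 - 2 * e2
  | succ n hn ih =>
    obtain ⟨ihA, ihB⟩ := ih
    have hkn : 2 ≤ k n := hkge n hn
    have hkn1 : k n < k (n+1) := hmono n hn
    have hkg : k (n+1) ≤ 2 * k n := hgrow n hn
    have hknR : (0:ℝ) < (k n : ℝ) := by positivity
    have hkn1R : (0:ℝ) < (k (n+1) : ℝ) := by
      have : 0 < k (n+1) := by omega
      positivity
    -- b n x = b n (k n) for x ∈ [k n, k (n+1))
    have hconst : ∀ x : ℝ, (k n : ℝ) ≤ x → x < (k (n+1) : ℝ) → b n x = b n ((k n : ℝ)) := by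
      intro x hx1 hx2
      set m : ℕ := ⌊x⌋₊ with hm
      have hx0 : 0 ≤ x := by linarith
      have hm1 : (m:ℝ) ≤ x := Nat.floor_le hx0
      have hm2 : x < (m:ℝ) + 1 := Nat.lt_floor_add_one x
      have hmk : k n ≤ m := Nat.le_floor hx1
      have hmk2 : m < k (n+1) := by
        have : (m:ℝ) < (k (n+1) : ℝ) := lt_of_le_of_lt hm1 hx2
        exact_mod_cast this
      rw [ihB m x hm1 hm2]
      rcases Nat.eq_or_lt_of_le hmk with h | h
      · rw [← h]
      · exact hleast n hn m h hmk2
    constructor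
    · intro x h1 h2
      rw [hbrec n hn x]
      rcases lt_or_ge x (k n : ℝ) with hc | hc
      · -- x < k n : both fract are identity, bracket is 0
        have hf1 : Int.fract (x / (k n : ℝ)) = x / (k n : ℝ) := by
          apply Int.fract_eq_self.mpr
          constructor
          · positivity
          · rw [div_lt_one hknR]; linarith
        have hf2 : Int.fract (x / (k (n+1) : ℝ)) = x / (k (n+1) : ℝ) := by
          apply Int.fract_eq_self.mpr
          constructor
          · positivity
          · rw [div_lt_one hkn1R]
            have : (k n : ℝ) ≤ (k (n+1) : ℝ) := by exact_mod_cast hkn1.le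
            linarith
        rw [hf1, hf2, ihA x h1 hc]
        have hb : x / (k n : ℝ) - (k (n+1) : ℝ) / (k n : ℝ) * (x / (k (n+1) : ℝ)) = 0 := by
          rw [div_mul_div_comm, mul_comm, ← div_mul_div_comm, div_self (ne_of_gt hkn1R), mul_one]
          ring
        rw [hb]
        ring
      · -- k n ≤ x < k(n+1) ≤ 2 k n
        have hf1 : Int.fract (x / (k n : ℝ)) = x / (k n : ℝ) - 1 := by
          rw [Int.fract]
          have : ⌊x / (k n : ℝ)⌋ = 1 := by
            rw [Int.floor_eq_iff]
            push_cast
            constructor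
            · rw [le_div_iff₀ hknR]; linarith
            · rw [div_lt_iff₀ hknR]
              have h2k : (k (n+1) : ℝ) ≤ 2 * (k n : ℝ) := by exact_mod_cast hkg
              linarith
          rw [this]; norm_num
        have hf2 : Int.fract (x / (k (n+1) : ℝ)) = x / (k (n+1) : ℝ) := by
          apply Int.fract_eq_self.mpr
          constructor
          · positivity
          · rw [div_lt_one hkn1R]; linarith
        rw [hf1, hf2, hconst x hc h2]
        have hb : x / (k n : ℝ) - 1 - (k (n+1) : ℝ) / (k n : ℝ) * (x / (k (n+1) : ℝ)) = -1 := by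
          rw [div_mul_div_comm, mul_comm, ← div_mul_div_comm, div_self (ne_of_gt hkn1R), mul_one]
          ring
        rw [hb]
        ring
    · intro m x h1 h2
      rw [hbrec n hn x, hbrec n hn (m:ℝ), ihB m x h1 h2]
      have e1 := aux_fract (k n) m (by omega) x h1 h2
      have e2 := aux_fract (k (n+1)) m (by omega) x h1 h2
      have key : (Int.fract (x / (k n : ℝ))
            - (k (n+1) : ℝ) / (k n : ℝ) * Int.fract (x / (k (n+1) : ℝ)))
          = (Int.fract ((m:ℝ) / (k n : ℝ))
            - (k (n+1) : ℝ) / (k n : ℝ) * Int.fract ((m:ℝ) / (k (n+1) : ℝ))) := by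
        have hr : (k (n+1) : ℝ) / (k n : ℝ) * ((x - m) / (k (n+1) : ℝ)) = (x - m) / (k n : ℝ) := by
          rw [div_mul_div_comm, mul_comm, ← div_mul_div_comm, div_self (ne_of_gt hkn1R), mul_one]
        linear_combination e1 - ((k (n+1) : ℝ) / (k n : ℝ)) * e2 - hr
      rw [key]
end

section
/- Under the iterative construction of the sequences (k_i) and (b_i), assume in addition k_{i+1} ≤ 2·k_i for all i ≥ 2. Then the sequence of functions (b_i) converges pointwise to the constant function −1 on [1, +∞): for every x ≥ 1, b_i(x) → −1 as i → ∞. -/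
/-!
Each term `ρ(x/k) - (k'/k) ρ(x/k')` depends only on `⌊x⌋`, since the fractional part of `x`
contributes `ρ(x)/k` to both summands; hence so does every `b_i`. By induction, `b_i = -1` on
`[1, k_i)`: below `k_i` the new term vanishes, while on `[k_i, k_{i+1}) ⊆ [k_i, 2 k_i)` it equals
`-1` and `b_i` is constant, equal to `b_i(k_i)`, by the minimality of `k_{i+1}`; so
`b_{i+1} = b_i(k_i) - (1 + b_i(k_i)) = -1` there. As `k_i ≥ i`, every `x ≥ 1` eventually lies in
`[1, k_i)`.
-/

theorem Int.fract_div_natCast_eq_fract_floor_div_add (x : ℝ) (k : ℕ) :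
    Int.fract (x / k) = Int.fract ((⌊x⌋ : ℝ) / k) + Int.fract x / k := by
  have hfloor : ⌊(⌊x⌋ : ℝ) / k⌋ = ⌊x / k⌋ := by
    rw [Int.floor_div_natCast, Int.floor_div_natCast, Int.floor_intCast]
  rw [Int.fract, Int.fract, Int.fract, hfloor]
  ring

noncomputable def sawtooth (k k' : ℕ) (x : ℝ) : ℝ :=
  Int.fract (x / k) - (k' / k) * Int.fract (x / k')

theorem sawtooth_floor {k k' : ℕ} (hk' : k' ≠ 0) (x : ℝ) :
    sawtooth k k' ⌊x⌋ = sawtooth k k' x := by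
  have hk'R : (k' : ℝ) ≠ 0 := Nat.cast_ne_zero.mpr hk'
  simp only [sawtooth, Int.fract_div_natCast_eq_fract_floor_div_add x]
  have hcancel : (k' / k : ℝ) * (Int.fract x / k') = Int.fract x / k := by
    rw [div_mul_div_comm, mul_comm (k' : ℝ), mul_div_mul_right _ _ hk'R]
  linear_combination hcancel

theorem sawtooth_eq_zero {k k' : ℕ} {x : ℝ} (hx : 0 ≤ x) (hxk : x < k) (hkk' : k ≤ k') :
    sawtooth k k' x = 0 := by
  have hk : (0 : ℝ) < k := hx.trans_lt hxk
  have hk' : (0 : ℝ) < k' := hk.trans_le (by exact_mod_cast hkk')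
  have hxk' : x < k' := hxk.trans_le (by exact_mod_cast hkk')
  rw [sawtooth, Int.fract_eq_self.mpr ⟨by positivity, (div_lt_one hk).mpr hxk⟩,
    Int.fract_eq_self.mpr ⟨by positivity, (div_lt_one hk').mpr hxk'⟩]
  field_simp
  ring

theorem sawtooth_eq_neg_one {k k' : ℕ} {x : ℝ} (hkx : k ≤ x) (hxk' : x < k')
    (hk'k : k' ≤ 2 * k) : sawtooth k k' x = -1 := by
  have hk'k : (k' : ℝ) ≤ 2 * k := by exact_mod_cast hk'k
  have hk : (0 : ℝ) < k := by linarith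
  have hk' : (0 : ℝ) < k' := by linarith
  have hfract : Int.fract (x / k) = x / k - 1 := by
    refine Int.fract_eq_iff.mpr ⟨?_, ?_, 1, by push_cast; ring⟩
    · rw [sub_nonneg, one_le_div hk]; exact hkx
    · rw [sub_lt_iff_lt_add, div_lt_iff₀ hk]; linarith
  rw [sawtooth, hfract,
    Int.fract_eq_self.mpr ⟨div_nonneg (by linarith) hk'.le, (div_lt_one hk').mpr hxk'⟩]
  field_simp
  ring

theorem eq_of_mem_Ico_of_apply_floor {f : ℝ → ℝ} {a c : ℕ} (hfloor : ∀ x, f ⌊x⌋ = f x)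
    (hconst : ∀ m : ℕ, a < m → m < c → f m = f a) {x : ℝ} (hax : a ≤ x) (hxc : x < c) :
    f x = f a := by
  have hx : 0 ≤ x := (Nat.cast_nonneg a).trans hax
  have hax' : a ≤ ⌊x⌋₊ := Nat.le_floor hax
  have hxc' : ⌊x⌋₊ < c := (Nat.floor_lt hx).mpr hxc
  rw [← hfloor, ← natCast_floor_eq_intCast_floor hx]
  rcases hax'.eq_or_lt with heq | hlt
  · rw [← heq]
  · exact hconst _ hlt hxc'

namespace SawtoothSeq

variable {k : ℕ → ℕ} {b : ℕ → ℝ → ℝ}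

theorem self_le_apply_of_two_le (hk2 : k 2 = 2) (hmono : ∀ i, 2 ≤ i → k i < k (i + 1)) {i : ℕ}
    (hi : 2 ≤ i) : i ≤ k i := by
  induction i, hi using Nat.le_induction with
  | base => omega
  | succ n hn ih => have := hmono n hn; omega

theorem apply_floor_eq (hk2 : k 2 = 2) (hb2 : ∀ x, b 2 x = sawtooth (k 1) (k 2) x)
    (hmono : ∀ i, 2 ≤ i → k i < k (i + 1))
    (hbrec : ∀ i, 2 ≤ i → ∀ x,
      b (i + 1) x = b i x + (1 + b i (k i)) * sawtooth (k i) (k (i + 1)) x)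
    {i : ℕ} (hi : 2 ≤ i) (x : ℝ) : b i ⌊x⌋ = b i x := by
  induction i, hi using Nat.le_induction generalizing x with
  | base => rw [hb2, hb2, sawtooth_floor (by omega)]
  | succ n hn ih =>
    rw [hbrec n hn, hbrec n hn, ih, sawtooth_floor (by have := hmono n hn; omega)]

theorem apply_eq_neg_one (hk1 : k 1 = 1) (hk2 : k 2 = 2)
    (hb2 : ∀ x, b 2 x = sawtooth (k 1) (k 2) x)
    (hmono : ∀ i, 2 ≤ i → k i < k (i + 1))
    (hleast : ∀ i, 2 ≤ i → ∀ m : ℕ, k i < m → m < k (i + 1) → b i m = b i (k i))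
    (hbrec : ∀ i, 2 ≤ i → ∀ x,
      b (i + 1) x = b i x + (1 + b i (k i)) * sawtooth (k i) (k (i + 1)) x)
    (hgrow : ∀ i, 2 ≤ i → k (i + 1) ≤ 2 * k i) {i : ℕ} (hi : 2 ≤ i) {x : ℝ} (hx : 1 ≤ x)
    (hxk : x < k i) : b i x = -1 := by
  induction i, hi using Nat.le_induction generalizing x with
  | base =>
    rw [hk2] at hxk
    rw [hb2, hk1, hk2]
    exact sawtooth_eq_neg_one (by exact_mod_cast hx) (by exact_mod_cast hxk) (by norm_num)
  | succ n hn ih =>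
    rw [hbrec n hn]
    rcases lt_or_ge x (k n) with hlt | hge
    · rw [ih hx hlt, sawtooth_eq_zero (by linarith) hlt (hmono n hn).le]
      ring
    · have hconst : b n x = b n (k n) :=
        eq_of_mem_Ico_of_apply_floor (apply_floor_eq hk2 hb2 hmono hbrec hn) (hleast n hn) hge hxk
      rw [hconst, sawtooth_eq_neg_one hge hxk (hgrow n hn)]
      ring

end SawtoothSeq

theorem stmt_11_general (k : ℕ → ℕ) (b : ℕ → ℝ → ℝ)
    (hk1 : k 1 = 1) (hk2 : k 2 = 2)
    (hb2 : ∀ x : ℝ, b 2 x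
      = Int.fract (x / (k 1 : ℝ)) - ((k 2 : ℝ) / (k 1 : ℝ)) * Int.fract (x / (k 2 : ℝ)))
    (hmono : ∀ i : ℕ, 2 ≤ i → k i < k (i + 1))
    (hleast : ∀ i : ℕ, 2 ≤ i → ∀ m : ℕ, k i < m → m < k (i + 1) → b i (m : ℝ) = b i ((k i : ℝ)))
    (hbrec : ∀ i : ℕ, 2 ≤ i → ∀ x : ℝ, b (i + 1) x
      = b i x + (1 + b i ((k i : ℝ)))
          * (Int.fract (x / (k i : ℝ))
            - ((k (i + 1) : ℝ) / (k i : ℝ)) * Int.fract (x / (k (i + 1) : ℝ))))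
    (hgrow : ∀ i : ℕ, 2 ≤ i → k (i + 1) ≤ 2 * k i) :
    ∀ x : ℝ, 1 ≤ x → Filter.Tendsto (fun i : ℕ => b i x) Filter.atTop (nhds (-1)) := by
  intro x hx
  refine tendsto_const_nhds.congr' ?_
  filter_upwards [Filter.eventually_ge_atTop (max 2 (⌊x⌋₊ + 1))] with i hi
  have hi2 : 2 ≤ i := le_of_max_le_left hi
  have hxk : x < k i := calc
    x < ⌊x⌋₊ + 1 := Nat.lt_floor_add_one x
    _ ≤ k i := by
      exact_mod_cast (le_of_max_le_right hi).trans
        (SawtoothSeq.self_le_apply_of_two_le hk2 hmono hi2)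
  exact (SawtoothSeq.apply_eq_neg_one hk1 hk2 hb2 hmono hleast hbrec hgrow hi2 hx hxk).symm

/-- If moreover `k_{i+1} ≤ 2 k_i` for `i ≥ 2`, then `b_i → -1` pointwise on `[1, ∞)`. -/
theorem stmt_11 (k : ℕ → ℕ) (b : ℕ → ℝ → ℝ)
    (hk1 : k 1 = 1) (hk2 : k 2 = 2)
    (hb2 : ∀ x : ℝ, b 2 x
      = Int.fract (x / (k 1 : ℝ)) - ((k 2 : ℝ) / (k 1 : ℝ)) * Int.fract (x / (k 2 : ℝ)))
    (hmono : ∀ i : ℕ, 2 ≤ i → k i < k (i + 1))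
    (hne : ∀ i : ℕ, 2 ≤ i → b i ((k (i + 1) : ℝ)) ≠ b i ((k i : ℝ)))
    (hleast : ∀ i : ℕ, 2 ≤ i → ∀ m : ℕ, k i < m → m < k (i + 1) → b i (m : ℝ) = b i ((k i : ℝ)))
    (hbrec : ∀ i : ℕ, 2 ≤ i → ∀ x : ℝ, b (i + 1) x
      = b i x + (1 + b i ((k i : ℝ)))
          * (Int.fract (x / (k i : ℝ))
            - ((k (i + 1) : ℝ) / (k i : ℝ)) * Int.fract (x / (k (i + 1) : ℝ))))
    (hgrow : ∀ i : ℕ, 2 ≤ i → k (i + 1) ≤ 2 * k i) :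
    ∀ x : ℝ, 1 ≤ x → Filter.Tendsto (fun i : ℕ => b i x) Filter.atTop (nhds (-1)) :=
  stmt_11_general k b hk1 hk2 hb2 hmono hleast hbrec hgrow
end

section
/- Under the iterative construction of the sequences (k_i) and (b_i), the following two conditions are equivalent: (a) Σ_{j=1}^{i} μ(k_j)/k_j = (1 + b_i(k_i))/k_i for all i ≥ 2; (b) b_i(x) = Σ_{j=1}^{i−1} μ(k_j)·ρ(x/k_j) − k_i·(Σ_{j=1}^{i−1} μ(k_j)/k_j)·ρ(x/k_i) for all i ≥ 2 and all x ≥ 0. -/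
/-- Equivalence of conditions (a) and (b) of the Lemma relating `b_i` to the Möbius function. -/
theorem stmt_13 (k : ℕ → ℕ) (b : ℕ → ℝ → ℝ)
    (hk1 : k 1 = 1) (hk2 : k 2 = 2)
    (hb2 : ∀ x : ℝ, b 2 x
      = Int.fract (x / (k 1 : ℝ)) - ((k 2 : ℝ) / (k 1 : ℝ)) * Int.fract (x / (k 2 : ℝ)))
    (hmono : ∀ i : ℕ, 2 ≤ i → k i < k (i + 1))
    (hne : ∀ i : ℕ, 2 ≤ i → b i ((k (i + 1) : ℝ)) ≠ b i ((k i : ℝ)))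
    (hleast : ∀ i : ℕ, 2 ≤ i → ∀ m : ℕ, k i < m → m < k (i + 1) → b i (m : ℝ) = b i ((k i : ℝ)))
    (hbrec : ∀ i : ℕ, 2 ≤ i → ∀ x : ℝ, b (i + 1) x
      = b i x + (1 + b i ((k i : ℝ)))
          * (Int.fract (x / (k i : ℝ))
            - ((k (i + 1) : ℝ) / (k i : ℝ)) * Int.fract (x / (k (i + 1) : ℝ)))) :
    (∀ i : ℕ, 2 ≤ i →
        ∑ j ∈ Finset.Icc 1 i, (ArithmeticFunction.moebius (k j) : ℝ) / (k j : ℝ)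
          = (1 + b i ((k i : ℝ))) / (k i : ℝ))
      ↔ (∀ i : ℕ, 2 ≤ i → ∀ x : ℝ, 0 ≤ x →
        b i x = (∑ j ∈ Finset.Icc 1 (i - 1),
              (ArithmeticFunction.moebius (k j) : ℝ) * Int.fract (x / (k j : ℝ)))
          - (k i : ℝ)
            * (∑ j ∈ Finset.Icc 1 (i - 1), (ArithmeticFunction.moebius (k j) : ℝ) / (k j : ℝ))
            * Int.fract (x / (k i : ℝ))) := by
  have hkpos : ∀ i : ℕ, 2 ≤ i → 0 < k i := by
    intro i hi
    induction i with
    | zero => omega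
    | succ n ih =>
      by_cases h : 2 ≤ n
      · exact (ih h).trans (hmono n h)
      · have hn1 : n = 1 := by omega
        subst hn1
        show 0 < k 2
        omega
  have hkR : ∀ i : ℕ, 2 ≤ i → (0:ℝ) < (k i : ℝ) := by
    intro i hi; exact_mod_cast hkpos i hi
  have hfract_self : ∀ i : ℕ, 2 ≤ i → Int.fract ((k i : ℝ) / (k i : ℝ)) = 0 := by
    intro i hi
    rw [div_self (hkR i hi).ne', Int.fract_one]
  have hfract_lt : ∀ i : ℕ, 2 ≤ i →
      Int.fract ((k i : ℝ) / (k (i+1) : ℝ)) = (k i : ℝ) / (k (i+1) : ℝ) := by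
    intro i hi
    have h1 : (0:ℝ) < (k (i+1) : ℝ) := hkR (i+1) (by omega)
    rw [Int.fract_eq_self]
    refine ⟨by positivity, ?_⟩
    rw [div_lt_one h1]
    exact_mod_cast hmono i hi
  constructor
  · intro ha i hi
    induction i, hi using Nat.le_induction with
    | base =>
      intro x hx
      rw [hb2 x]
      simp [hk1, hk2]
    | succ n hn ih =>
      intro x hx
      obtain ⟨m, rfl⟩ : ∃ m, n = m + 2 := ⟨n - 2, by omega⟩
      have hS := ha (m+2) hn
      have hkn : ((k (m+2) : ℝ)) ≠ 0 := (hkR (m+2) hn).ne'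
      rw [eq_div_iff hkn] at hS
      have hb1 : (1 : ℝ) + b (m+2) ((k (m+2) : ℝ))
          = (∑ j ∈ Finset.Icc 1 (m+2),
              (ArithmeticFunction.moebius (k j) : ℝ) / (k j : ℝ)) * (k (m+2) : ℝ) := by
        linarith [hS]
      rw [hbrec (m+2) hn x, ih x hx, hb1]
      simp only [show m + 2 + 1 - 1 = m + 2 from rfl, show m + 2 - 1 = m + 1 from rfl]
      rw [Finset.sum_Icc_succ_top (by omega : 1 ≤ m + 2)
        (fun j => (ArithmeticFunction.moebius (k j) : ℝ) * Int.fract (x / (k j : ℝ)))]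
      rw [Finset.sum_Icc_succ_top (by omega : 1 ≤ m + 2)
        (fun j => (ArithmeticFunction.moebius (k j) : ℝ) / (k j : ℝ))]
      field_simp
      ring
  · intro hb i hi
    obtain ⟨m, rfl⟩ : ∃ m, i = m + 2 := ⟨i - 2, by omega⟩
    have hi1 : 2 ≤ m + 3 := by omega
    have hkn : ((k (m+2) : ℝ)) ≠ 0 := (hkR (m+2) hi).ne'
    have hkn1 : ((k (m+3) : ℝ)) ≠ 0 := (hkR (m+3) hi1).ne'
    have h1 := hb (m+2) hi ((k (m+2) : ℝ)) (by positivity)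
    have h2 := hb (m+3) hi1 ((k (m+2) : ℝ)) (by positivity)
    have hrec := hbrec (m+2) hi ((k (m+2) : ℝ))
    rw [hfract_self (m+2) hi] at h1 hrec
    rw [hfract_lt (m+2) hi] at hrec
    simp only [show m + 3 - 1 = m + 2 from rfl, show m + 2 - 1 = m + 1 from rfl] at h1 h2
    rw [hfract_lt (m+2) hi] at h2
    rw [Finset.sum_Icc_succ_top (by omega : 1 ≤ m + 2)
      (fun j => (ArithmeticFunction.moebius (k j) : ℝ)
        * Int.fract ((k (m+2) : ℝ) / (k j : ℝ)))] at h2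
    rw [Finset.sum_Icc_succ_top (by omega : 1 ≤ m + 2)
      (fun j => (ArithmeticFunction.moebius (k j) : ℝ) / (k j : ℝ))] at h2 ⊢
    rw [hfract_self (m+2) hi] at h2
    rw [h1] at hrec
    rw [h2] at hrec
    rw [eq_div_iff hkn]
    field_simp at hrec ⊢
    nlinarith [hrec, hkR (m+3) hi1]
end

section
/- Under the iterative construction of the sequences (k_i) and (b_i), assume in addition k_{i+1} < 2·k_i for all i ≥ 2. Then the following two conditions are equivalent: (a) Σ_{j=1}^{i} μ(k_j)/k_j = (1 + b_i(k_i))/k_i for all i ≥ 2; (d) μ(k_{i+1}) = b_i(k_{i+1}) − b_i(k_i) for all i ≥ 2. -/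
/-- Assuming `k_{i+1} < 2 k_i` for `i ≥ 2`: equivalence of conditions (a) and (d). -/
theorem stmt_15 (k : ℕ → ℕ) (b : ℕ → ℝ → ℝ)
    (hk1 : k 1 = 1) (hk2 : k 2 = 2)
    (hb2 : ∀ x : ℝ, b 2 x
      = Int.fract (x / (k 1 : ℝ)) - ((k 2 : ℝ) / (k 1 : ℝ)) * Int.fract (x / (k 2 : ℝ)))
    (hmono : ∀ i : ℕ, 2 ≤ i → k i < k (i + 1))
    (hne : ∀ i : ℕ, 2 ≤ i → b i ((k (i + 1) : ℝ)) ≠ b i ((k i : ℝ)))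
    (hleast : ∀ i : ℕ, 2 ≤ i → ∀ m : ℕ, k i < m → m < k (i + 1) → b i (m : ℝ) = b i ((k i : ℝ)))
    (hbrec : ∀ i : ℕ, 2 ≤ i → ∀ x : ℝ, b (i + 1) x
      = b i x + (1 + b i ((k i : ℝ)))
          * (Int.fract (x / (k i : ℝ))
            - ((k (i + 1) : ℝ) / (k i : ℝ)) * Int.fract (x / (k (i + 1) : ℝ))))
    (hgrow : ∀ i : ℕ, 2 ≤ i → k (i + 1) < 2 * k i) :
    (∀ i : ℕ, 2 ≤ i →
        ∑ j ∈ Finset.Icc 1 i, (ArithmeticFunction.moebius (k j) : ℝ) / (k j : ℝ)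
          = (1 + b i ((k i : ℝ))) / (k i : ℝ))
      ↔ (∀ i : ℕ, 2 ≤ i →
        (ArithmeticFunction.moebius (k (i + 1)) : ℝ)
          = b i ((k (i + 1) : ℝ)) - b i ((k i : ℝ))) := by
  -- positivity of k i for i ≥ 2
  have hkpos : ∀ i : ℕ, 2 ≤ i → 2 ≤ k i := by
    intro i hi
    induction i with
    | zero => omega
    | succ n ih =>
      rcases Nat.lt_or_ge n 2 with h | h
      · have hn : n = 1 := by omega
        subst hn
        rw [show (1:ℕ)+1 = 2 from rfl, hk2]
      · have := hmono n h; have := ih h; omega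
  -- base case: S_2 = A_2 = 1/2
  have hbase2 : b 2 ((k 2 : ℝ)) = 0 := by
    have h := hb2 ((k 2 : ℝ))
    rw [hk1] at h
    rw [h, hk2]
    push_cast
    have h1 : Int.fract (2:ℝ) = 0 := by
      rw [show (2:ℝ) = ((2:ℤ):ℝ) by norm_num, Int.fract_intCast]
    have h2 : Int.fract (1:ℝ) = 0 := by
      rw [show (1:ℝ) = ((1:ℤ):ℝ) by norm_num, Int.fract_intCast]
    norm_num [h1, h2]
  have hsum2 : ∑ j ∈ Finset.Icc 1 2, (ArithmeticFunction.moebius (k j) : ℝ) / (k j : ℝ)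
      = (1 + b 2 ((k 2 : ℝ))) / (k 2 : ℝ) := by
    rw [hbase2]
    rw [show Finset.Icc 1 2 = {1, 2} by rfl]
    rw [Finset.sum_insert (by decide), Finset.sum_singleton, hk1, hk2]
    have hm1 : ArithmeticFunction.moebius 1 = 1 := ArithmeticFunction.moebius_apply_one
    have hm2 : ArithmeticFunction.moebius 2 = -1 :=
      ArithmeticFunction.moebius_apply_prime Nat.prime_two
    rw [hm1, hm2]
    norm_num
  -- key increment identity
  have key : ∀ i : ℕ, 2 ≤ i →
      (1 + b (i+1) ((k (i+1) : ℝ))) / ((k (i+1) : ℝ))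
        = (1 + b i ((k i : ℝ))) / ((k i : ℝ))
          + (b i ((k (i+1) : ℝ)) - b i ((k i : ℝ))) / ((k (i+1) : ℝ)) := by
    intro i hi
    have h1 : 2 ≤ k i := hkpos i hi
    have h2 : k i < k (i+1) := hmono i hi
    have h3 : k (i+1) < 2 * k i := hgrow i hi
    have hki : (0:ℝ) < (k i : ℝ) := by exact_mod_cast Nat.lt_of_lt_of_le Nat.zero_lt_two h1
    have hki1 : (0:ℝ) < (k (i+1) : ℝ) := by
      have : 0 < k (i+1) := by omega
      exact_mod_cast this
    have hfr1 : Int.fract ((k (i+1) : ℝ) / (k (i+1) : ℝ)) = 0 := by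
      rw [div_self hki1.ne']
      rw [show (1:ℝ) = ((1:ℤ):ℝ) by norm_num, Int.fract_intCast]
    have hfl : Int.fract ((k (i+1) : ℝ) / (k i : ℝ)) = (k (i+1) : ℝ) / (k i : ℝ) - 1 := by
      have hfloor : ⌊(k (i+1) : ℝ) / (k i : ℝ)⌋ = 1 := by
        rw [Int.floor_eq_iff]
        constructor
        · rw [le_div_iff₀ hki]
          push_cast
          have : (k i : ℝ) < (k (i+1) : ℝ) := by exact_mod_cast h2
          linarith
        · rw [div_lt_iff₀ hki]
          push_cast
          have : ((k (i+1) : ℕ) : ℝ) < 2 * (k i : ℝ) := by exact_mod_cast h3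
          linarith
      rw [Int.fract, hfloor]; norm_num
    have hb := hbrec i hi ((k (i+1) : ℝ))
    rw [hfr1, hfl, mul_zero, sub_zero] at hb
    rw [hb]
    field_simp
    ring
  constructor
  · -- (a) → (d)
    intro ha i hi
    have hSi := ha i hi
    have hSi1 := ha (i+1) (by omega)
    have hstep : ∑ j ∈ Finset.Icc 1 (i+1), (ArithmeticFunction.moebius (k j) : ℝ) / (k j : ℝ)
        = (∑ j ∈ Finset.Icc 1 i, (ArithmeticFunction.moebius (k j) : ℝ) / (k j : ℝ))
          + (ArithmeticFunction.moebius (k (i+1)) : ℝ) / (k (i+1) : ℝ) := by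
      rw [← Finset.sum_Icc_succ_top (by omega : 1 ≤ i + 1)]
    rw [hstep, hSi, key i hi] at hSi1
    have hki1 : (0:ℝ) < (k (i+1) : ℝ) := by
      have := hkpos (i+1) (by omega)
      exact_mod_cast Nat.lt_of_lt_of_le Nat.zero_lt_two this
    have := add_left_cancel hSi1
    field_simp at this
    linarith
  · -- (d) → (a)
    intro hd i hi
    induction i, hi using Nat.le_induction with
    | base => exact hsum2
    | succ n hn ih =>
      have hstep : ∑ j ∈ Finset.Icc 1 (n+1), (ArithmeticFunction.moebius (k j) : ℝ) / (k j : ℝ)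
          = (∑ j ∈ Finset.Icc 1 n, (ArithmeticFunction.moebius (k j) : ℝ) / (k j : ℝ))
            + (ArithmeticFunction.moebius (k (n+1)) : ℝ) / (k (n+1) : ℝ) := by
        rw [← Finset.sum_Icc_succ_top (by omega : 1 ≤ n + 1)]
      rw [hstep, ih, hd n hn, key n hn]
end

section
/- Under the iterative construction of the sequences (k_i) and (b_i), assume in addition k_{i+1} < 2·k_i for all i ≥ 2. Then the following two conditions are equivalent: (a) Σ_{j=1}^{i} μ(k_j)/k_j = (1 + b_i(k_i))/k_i for all i ≥ 2; (e) Σ_{j=1}^{i} μ(k_j)·⌊k_i/k_j⌋ = 1 for all i ≥ 1. -/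
/-!
Write `S_i = Σ_{j ≤ i} μ(k_j)/k_j`. If (a) holds up to `i`, the recursion telescopes to
`b_{i+1}(x) = Σ_{j ≤ i} μ(k_j) ρ(x/k_j) - k_{i+1} S_i ρ(x/k_{i+1})`. Evaluating at `x = k_{i+1}`
and using `ρ(n/k) = n/k - ⌊n/k⌋` gives
`k_{i+1} S_{i+1} - (1 + b_{i+1}(k_{i+1})) = Σ_{j ≤ i+1} μ(k_j) ⌊k_{i+1}/k_j⌋ - 1`,
so (a) at `i + 1` is equivalent to (e) at `i + 1`, and both directions follow by induction on `i`.
-/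

open Finset
open scoped ArithmeticFunction.Moebius

noncomputable def moebiusRecipSum (k : ℕ → ℕ) (i : ℕ) : ℝ :=
  ∑ j ∈ Icc 1 i, (μ (k j) : ℝ) / k j

def moebiusFloorSum (k : ℕ → ℕ) (i n : ℕ) : ℤ :=
  ∑ j ∈ Icc 1 i, μ (k j) * ((n / k j : ℕ) : ℤ)

lemma moebiusRecipSum_succ (k : ℕ → ℕ) (i : ℕ) :
    moebiusRecipSum k (i + 1) = moebiusRecipSum k i + μ (k (i + 1)) / k (i + 1) :=
  sum_Icc_succ_top (by omega) _

lemma moebiusFloorSum_succ (k : ℕ → ℕ) (i n : ℕ) :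
    moebiusFloorSum k (i + 1) n
      = moebiusFloorSum k i n + μ (k (i + 1)) * ((n / k (i + 1) : ℕ) : ℤ) :=
  sum_Icc_succ_top (by omega) _

lemma Int.fract_natCast_div_natCast {a c : ℕ} (hc : c ≠ 0) :
    Int.fract ((a : ℝ) / c) = a / c - ((a / c : ℕ) : ℝ) := by
  have hdiv : (a : ℝ) = (a % c : ℕ) + c * (a / c : ℕ) := by
    exact_mod_cast (Nat.mod_add_div a c).symm
  rw [Int.fract_div_natCast_eq_div_natCast_mod, hdiv]
  field_simp
  ring

lemma pos_of_le_succ {k : ℕ → ℕ} (hk1 : 0 < k 1) (hk2 : 0 < k 2)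
    (hmono : ∀ i, 2 ≤ i → k i ≤ k (i + 1)) : ∀ j, 1 ≤ j → 0 < k j := by
  intro j hj
  induction j, hj using Nat.le_induction with
  | base => exact hk1
  | succ n hn ih =>
    obtain rfl | hn := hn.eq_or_lt
    · exact hk2
    · exact ih.trans_le (hmono n hn)

lemma moebiusFloorSum_eq {k : ℕ → ℕ} (hpos : ∀ j, 1 ≤ j → 0 < k j) (i n : ℕ) :
    (moebiusFloorSum k i n : ℝ)
      = n * moebiusRecipSum k i - ∑ j ∈ Icc 1 i, (μ (k j) : ℝ) * Int.fract ((n : ℝ) / k j) := by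
  rw [moebiusFloorSum, moebiusRecipSum, mul_sum, ← sum_sub_distrib, Int.cast_sum]
  refine sum_congr rfl fun j hj => ?_
  have hkj : k j ≠ 0 := (hpos j (mem_Icc.1 hj).1).ne'
  rw [Int.fract_natCast_div_natCast hkj, Int.cast_mul, Int.cast_natCast]
  ring

section Recursion

variable {k : ℕ → ℕ} {b : ℕ → ℝ → ℝ}

lemma b_succ_eq_sum_fract (hk1 : k 1 = 1) (hk2 : k 2 = 2)
    (hb2 : ∀ x : ℝ, b 2 x
      = Int.fract (x / (k 1 : ℝ)) - ((k 2 : ℝ) / (k 1 : ℝ)) * Int.fract (x / (k 2 : ℝ)))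
    (hbrec : ∀ i : ℕ, 2 ≤ i → ∀ x : ℝ, b (i + 1) x
      = b i x + (1 + b i ((k i : ℝ)))
          * (Int.fract (x / (k i : ℝ))
            - ((k (i + 1) : ℝ) / (k i : ℝ)) * Int.fract (x / (k (i + 1) : ℝ))))
    (hpos : ∀ j, 1 ≤ j → 0 < k j) {i : ℕ} (hi : 1 ≤ i)
    (ha : ∀ j, 2 ≤ j → j ≤ i → 1 + b j (k j) = k j * moebiusRecipSum k j) (x : ℝ) :
    b (i + 1) x = ∑ j ∈ Icc 1 i, (μ (k j) : ℝ) * Int.fract (x / k j)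
      - k (i + 1) * moebiusRecipSum k i * Int.fract (x / k (i + 1)) := by
  induction i, hi using Nat.le_induction with
  | base => simp [hb2, hk1, hk2, moebiusRecipSum]
  | succ n hn ih =>
    have hkn : (k (n + 1) : ℝ) ≠ 0 := by exact_mod_cast (hpos (n + 1) (by omega)).ne'
    rw [hbrec (n + 1) (by omega), ih fun j hj _ => ha j hj (by omega),
      ha (n + 1) (by omega) le_rfl, sum_Icc_succ_top (by omega), moebiusRecipSum_succ]
    field_simp
    ring

lemma mul_moebiusRecipSum_sub_eq (hk1 : k 1 = 1) (hk2 : k 2 = 2)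
    (hb2 : ∀ x : ℝ, b 2 x
      = Int.fract (x / (k 1 : ℝ)) - ((k 2 : ℝ) / (k 1 : ℝ)) * Int.fract (x / (k 2 : ℝ)))
    (hbrec : ∀ i : ℕ, 2 ≤ i → ∀ x : ℝ, b (i + 1) x
      = b i x + (1 + b i ((k i : ℝ)))
          * (Int.fract (x / (k i : ℝ))
            - ((k (i + 1) : ℝ) / (k i : ℝ)) * Int.fract (x / (k (i + 1) : ℝ))))
    (hpos : ∀ j, 1 ≤ j → 0 < k j) {i : ℕ} (hi : 1 ≤ i)
    (ha : ∀ j, 2 ≤ j → j ≤ i → 1 + b j (k j) = k j * moebiusRecipSum k j) :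
    k (i + 1) * moebiusRecipSum k (i + 1) - (1 + b (i + 1) (k (i + 1)))
      = moebiusFloorSum k (i + 1) (k (i + 1)) - 1 := by
  have hk : k (i + 1) ≠ 0 := (hpos (i + 1) (by omega)).ne'
  rw [b_succ_eq_sum_fract hk1 hk2 hb2 hbrec hpos hi ha, div_self (by exact_mod_cast hk),
    Int.fract_one, moebiusFloorSum_succ, Nat.div_self (Nat.pos_of_ne_zero hk), moebiusRecipSum_succ]
  push_cast
  rw [moebiusFloorSum_eq hpos]
  field_simp
  ring

end Recursion

theorem stmt_16_general (k : ℕ → ℕ) (b : ℕ → ℝ → ℝ)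
    (hk1 : k 1 = 1) (hk2 : k 2 = 2)
    (hb2 : ∀ x : ℝ, b 2 x
      = Int.fract (x / (k 1 : ℝ)) - ((k 2 : ℝ) / (k 1 : ℝ)) * Int.fract (x / (k 2 : ℝ)))
    (hmono : ∀ i : ℕ, 2 ≤ i → k i < k (i + 1))
    (hbrec : ∀ i : ℕ, 2 ≤ i → ∀ x : ℝ, b (i + 1) x
      = b i x + (1 + b i ((k i : ℝ)))
          * (Int.fract (x / (k i : ℝ))
            - ((k (i + 1) : ℝ) / (k i : ℝ)) * Int.fract (x / (k (i + 1) : ℝ)))) :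
    (∀ i : ℕ, 2 ≤ i →
        ∑ j ∈ Finset.Icc 1 i, (ArithmeticFunction.moebius (k j) : ℝ) / (k j : ℝ)
          = (1 + b i ((k i : ℝ))) / (k i : ℝ))
      ↔ (∀ i : ℕ, 1 ≤ i →
        ∑ j ∈ Finset.Icc 1 i, ArithmeticFunction.moebius (k j) * ((k i / k j : ℕ) : ℤ) = 1) := by
  have hpos := pos_of_le_succ (by omega) (by omega) fun i hi => (hmono i hi).le
  have hdefect := fun i hi ha => mul_moebiusRecipSum_sub_eq hk1 hk2 hb2 hbrec hpos (i := i) hi ha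
  have condA_iff (i : ℕ) (hi : 2 ≤ i) : moebiusRecipSum k i = (1 + b i (k i)) / k i ↔
      1 + b i (k i) = k i * moebiusRecipSum k i := by
    rw [eq_div_iff (by exact_mod_cast (hpos i (by omega)).ne'), eq_comm, mul_comm]
  change (∀ i, 2 ≤ i → moebiusRecipSum k i = _) ↔ ∀ i, 1 ≤ i → moebiusFloorSum k i (k i) = 1
  constructor
  · intro ha i hi
    obtain rfl | ⟨n, hn, rfl⟩ : i = 1 ∨ ∃ n, 1 ≤ n ∧ i = n + 1 :=
      hi.eq_or_lt'.imp_right fun _ => ⟨i - 1, by omega, by omega⟩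
    · simp [moebiusFloorSum, hk1]
    · have h := hdefect n hn fun j hj _ => (condA_iff j hj).1 (ha j hj)
      rw [← (condA_iff _ (by omega)).1 (ha _ (by omega)), sub_self, eq_comm, sub_eq_zero] at h
      exact_mod_cast h
  · intro he
    suffices ha : ∀ i, 2 ≤ i → 1 + b i (k i) = k i * moebiusRecipSum k i from
      fun i hi => (condA_iff i hi).2 (ha i hi)
    intro i hi
    induction i using Nat.strong_induction_on with
    | _ i IH =>
      obtain ⟨n, rfl⟩ : ∃ n, i = n + 1 := ⟨i - 1, by omega⟩
      have h := hdefect n (by omega) fun j hj _ => IH j (by omega) hj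
      rw [he (n + 1) (by omega), Int.cast_one, sub_self, sub_eq_zero] at h
      exact h.symm

/-- Assuming `k_{i+1} < 2 k_i` for `i ≥ 2`: equivalence of conditions (a) and (e). -/
theorem stmt_16 (k : ℕ → ℕ) (b : ℕ → ℝ → ℝ)
    (hk1 : k 1 = 1) (hk2 : k 2 = 2)
    (hb2 : ∀ x : ℝ, b 2 x
      = Int.fract (x / (k 1 : ℝ)) - ((k 2 : ℝ) / (k 1 : ℝ)) * Int.fract (x / (k 2 : ℝ)))
    (hmono : ∀ i : ℕ, 2 ≤ i → k i < k (i + 1))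
    (hne : ∀ i : ℕ, 2 ≤ i → b i ((k (i + 1) : ℝ)) ≠ b i ((k i : ℝ)))
    (hleast : ∀ i : ℕ, 2 ≤ i → ∀ m : ℕ, k i < m → m < k (i + 1) → b i (m : ℝ) = b i ((k i : ℝ)))
    (hbrec : ∀ i : ℕ, 2 ≤ i → ∀ x : ℝ, b (i + 1) x
      = b i x + (1 + b i ((k i : ℝ)))
          * (Int.fract (x / (k i : ℝ))
            - ((k (i + 1) : ℝ) / (k i : ℝ)) * Int.fract (x / (k (i + 1) : ℝ))))
    (hgrow : ∀ i : ℕ, 2 ≤ i → k (i + 1) < 2 * k i) :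
    (∀ i : ℕ, 2 ≤ i →
        ∑ j ∈ Finset.Icc 1 i, (ArithmeticFunction.moebius (k j) : ℝ) / (k j : ℝ)
          = (1 + b i ((k i : ℝ))) / (k i : ℝ))
      ↔ (∀ i : ℕ, 1 ≤ i →
        ∑ j ∈ Finset.Icc 1 i, ArithmeticFunction.moebius (k j) * ((k i / k j : ℕ) : ℤ) = 1) :=
  stmt_16_general k b hk1 hk2 hb2 hmono hbrec
end
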